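/- arXiv:2208.13291 — 5 statements merged into one kernel-verified Lean document; each statement's English description precedes it below -/
import Mathlib

section
/- If a basis is 1-(1, RPSLC), then it is 1-suppression quasi-greedy: ‖x − P_Λ(x)‖ ≤ ‖x‖ for all x and all greedy sets Λ of x. -/
open Finset Filter

noncomputable section

variable {X : Type*} [NormedAddCommGroup X] [NormedSpace ℝ X]

/-- Projection `P_A x = ∑_{n ∈ A} e_n^*(x) e_n`. -/
def proj (f : ℕ → X →L[ℝ] ℝ) (e : ℕ → X) (A : Finset ℕ) (x : X) : X :=
  ∑ n ∈ A, f n x • e n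

/-- `Λ` is a greedy set of `x`. -/
def GreedySet (f : ℕ → X →L[ℝ] ℝ) (x : X) (Λ : Finset ℕ) : Prop :=
  ∀ n ∈ Λ, ∀ m, m ∉ Λ → |f m x| ≤ |f n x|

/-- A (biorthogonal, norm-bounded, fundamental) basis system. -/
structure BasisSystem (f : ℕ → X →L[ℝ] ℝ) (e : ℕ → X) : Prop where
  biorth : ∀ n m, f n (e m) = if n = m then (1 : ℝ) else 0
  dense : Dense (Submodule.span ℝ (Set.range e) : Set X)
  bounded : ∃ c₁ c₂ : ℝ, 0 < c₁ ∧ ∀ n, c₁ ≤ ‖e n‖ ∧ ‖e n‖ ≤ c₂ ∧ ‖f n‖ ≤ c₂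

/-- `σ̌^Λ_m(x)`: inf of `‖x - P_I x‖` over `I = ∅` or intervals `I` with
`Λ ≤ max I` and `|I| ≤ m`. -/
def checkSigma (f : ℕ → X →L[ℝ] ℝ) (e : ℕ → X) (Λ : Finset ℕ) (m : ℕ) (x : X) : ℝ :=
  sInf {r : ℝ | ∃ I : Finset ℕ,
    (I = ∅ ∨ ∃ a b : ℕ, a ≤ b ∧ I = Finset.Icc a b ∧ ∀ n ∈ Λ, n ≤ b) ∧
    I.card ≤ m ∧ r = ‖x - proj f e I x‖}

/-- `σ̂^Λ_m(x)`: inf of `‖x - P_I x‖` over `I = ∅` or intervals `I` with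
`min I ≤ Λ` and `|I| ≤ m`. -/
def hatSigma (f : ℕ → X →L[ℝ] ℝ) (e : ℕ → X) (Λ : Finset ℕ) (m : ℕ) (x : X) : ℝ :=
  sInf {r : ℝ | ∃ I : Finset ℕ,
    (I = ∅ ∨ ∃ a b : ℕ, a ≤ b ∧ I = Finset.Icc a b ∧ ∀ n ∈ Λ, a ≤ n) ∧
    I.card ≤ m ∧ r = ‖x - proj f e I x‖}

/-- `σ̃^{R,Λ}_m(x)`: inf of `‖x - P_A x‖` over `|A| ≤ m`, `A > Λ`. -/
def revSigma (f : ℕ → X →L[ℝ] ℝ) (e : ℕ → X) (Λ : Finset ℕ) (m : ℕ) (x : X) : ℝ :=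
  sInf {r : ℝ | ∃ A : Finset ℕ, A.card ≤ m ∧ (∀ n ∈ Λ, ∀ a ∈ A, n < a) ∧
    r = ‖x - proj f e A x‖}

/-- Reverse partially greedy with constant `C`. -/
def RPG (f : ℕ → X →L[ℝ] ℝ) (e : ℕ → X) (C : ℝ) : Prop :=
  ∀ (x : X) (m : ℕ) (Λ : Finset ℕ), Λ.card = m → GreedySet f x Λ →
    ‖x - proj f e Λ x‖ ≤ C * revSigma f e Λ m x

/-- `(λ, RPGII)` with constant `C`. -/
def RPGII (f : ℕ → X →L[ℝ] ℝ) (e : ℕ → X) (l C : ℝ) : Prop :=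
  ∀ (x : X) (m : ℕ) (Λ : Finset ℕ), Λ.card = ⌈l * (m : ℝ)⌉₊ → GreedySet f x Λ →
    ‖x - proj f e Λ x‖ ≤ C * checkSigma f e Λ m x

/-- Quasi-greedy with constant `C`. -/
def QG (f : ℕ → X →L[ℝ] ℝ) (e : ℕ → X) (C : ℝ) : Prop :=
  ∀ (x : X) (Λ : Finset ℕ), GreedySet f x Λ → ‖proj f e Λ x‖ ≤ C * ‖x‖

/-- Suppression quasi-greedy with constant `C`. -/
def SuppQG (f : ℕ → X →L[ℝ] ℝ) (e : ℕ → X) (C : ℝ) : Prop :=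
  ∀ (x : X) (Λ : Finset ℕ), GreedySet f x Λ → ‖x - proj f e Λ x‖ ≤ C * ‖x‖

/-- Reverse conservative with constant `C`. -/
def RevConservative (e : ℕ → X) (C : ℝ) : Prop :=
  ∀ A B : Finset ℕ, (∀ b ∈ B, ∀ a ∈ A, b < a) → A.card ≤ B.card →
    ‖∑ n ∈ A, e n‖ ≤ C * ‖∑ n ∈ B, e n‖

/-- `s(A) = max A - min A + 1` (and `s(∅) = 0`). -/
def spread (A : Finset ℕ) : ℕ :=
  if h : A.Nonempty then A.max' h - A.min' h + 1 else 0

/-- `(λ, reverse conservative of type II)` with constant `C`. -/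
def RevConsII (e : ℕ → X) (l C : ℝ) : Prop :=
  ∀ A B : Finset ℕ, (l - 1) * spread A + (A.card : ℝ) ≤ (B.card : ℝ) →
    (∀ b ∈ B, ∀ a ∈ A, b < a) → ‖∑ n ∈ A, e n‖ ≤ C * ‖∑ n ∈ B, e n‖

/-- `x` surrounds `A`: `supp x ∩ [min A, max A] = ∅` (vacuous for `A = ∅`). -/
def Surrounds (f : ℕ → X →L[ℝ] ℝ) (x : X) (A : Finset ℕ) : Prop :=
  ∀ a ∈ A, ∀ b ∈ A, ∀ n, a ≤ n → n ≤ b → f n x = 0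

/-- `(λ, RPSLC)` with constant `Δ`. -/
def RPSLC (f : ℕ → X →L[ℝ] ℝ) (e : ℕ → X) (l Δ : ℝ) : Prop :=
  ∀ x : X, (∀ n, |f n x| ≤ 1) →
    ∀ ε δ : ℕ → ℝ, (∀ n, |ε n| = 1) → (∀ n, |δ n| = 1) →
    ∀ A B : Finset ℕ, (l - 1) * spread A + (A.card : ℝ) ≤ (B.card : ℝ) →
    (∀ n ∈ B, f n x = 0) → (∀ b ∈ B, ∀ a ∈ A, b < a) → Surrounds f x A →
    ‖x + ∑ n ∈ A, ε n • e n‖ ≤ Δ * ‖x + ∑ n ∈ B, δ n • e n‖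

lemma proj_coeff {f : ℕ → X →L[ℝ] ℝ} {e : ℕ → X} (hb : BasisSystem f e)
    (Λ : Finset ℕ) (x : X) (n : ℕ) :
    f n (proj f e Λ x) = if n ∈ Λ then f n x else 0 := by
  unfold proj
  rw [map_sum]
  simp only [map_smul, hb.biorth, smul_eq_mul, mul_ite, mul_one, mul_zero]
  exact Finset.sum_ite_eq Λ n fun j => f j x

lemma rpslc_step {f : ℕ → X →L[ℝ] ℝ} {e : ℕ → X} (h : RPSLC f e 1 1)
    (y : X) (k : ℕ) (c : ℝ) (hk : f k y = 0) (hc : ∀ n, |f n y| ≤ |c|) :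
    ‖y‖ ≤ ‖y + c • e k‖ := by
  rcases eq_or_ne c 0 with rfl | hc0
  · simp
  have ht : (0 : ℝ) < |c| := abs_pos.2 hc0
  have key := h (|c|⁻¹ • y)
    (fun n => by
      rw [map_smul, smul_eq_mul, abs_mul, abs_inv, abs_abs]
      rw [inv_mul_le_one₀ ht]
      simpa using hc n)
    (fun _ => 1) (fun _ => c / |c|)
    (fun n => by simp)
    (fun n => by rw [abs_div, abs_abs, div_self ht.ne'])
    ∅ {k}
    (by simp)
    (fun n hn => by
      simp only [Finset.mem_singleton] at hn
      subst hn
      rw [map_smul, smul_eq_mul, hk, mul_zero])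
    (fun b hb a ha => absurd ha (Finset.notMem_empty a))
    (fun a ha => absurd ha (Finset.notMem_empty a))
  simp only [Finset.sum_empty, add_zero, Finset.sum_singleton, one_mul] at key
  have heq : |c|⁻¹ • y + (c / |c|) • e k = |c|⁻¹ • (y + c • e k) := by
    rw [smul_add, smul_smul]
    rw [div_eq_inv_mul]
  rw [heq, norm_smul, norm_smul] at key
  simp only [norm_inv, Real.norm_eq_abs, abs_abs] at key
  exact le_of_mul_le_mul_left key (inv_pos.2 ht)

/-- a 1-(1, RPSLC) basis is 1-suppression quasi-greedy. -/
theorem stmt_11 (f : ℕ → X →L[ℝ] ℝ) (e : ℕ → X) (hb : BasisSystem f e)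
    (h : RPSLC f e 1 1) : SuppQG f e 1 := by
  intro x Λ hΛ
  rw [one_mul]
  revert hΛ
  induction Λ using Finset.strongInduction with
  | _ Λ IH =>
    intro hΛ
    rcases Λ.eq_empty_or_nonempty with rfl | hne
    · simp [proj]
    obtain ⟨k, hkΛ, hkmin⟩ := Λ.exists_min_image (fun n => |f n x|) hne
    have hgreedy' : GreedySet f x (Λ.erase k) := by
      intro n hn m hm
      by_cases hmΛ : m ∈ Λ
      · have hmk : m = k := by
          by_contra hmk
          exact hm (Finset.mem_erase.mpr ⟨hmk, hmΛ⟩)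
        subst hmk
        exact hkmin n (Finset.mem_of_mem_erase hn)
      · exact hΛ n (Finset.mem_of_mem_erase hn) m hmΛ
    have hdecomp : x - proj f e (Λ.erase k) x = (x - proj f e Λ x) + f k x • e k := by
      unfold proj
      rw [← Finset.add_sum_erase _ _ hkΛ]
      abel
    have key : ‖x - proj f e Λ x‖ ≤ ‖x - proj f e (Λ.erase k) x‖ := by
      rw [hdecomp]
      apply rpslc_step h
      · rw [map_sub, proj_coeff hb, if_pos hkΛ, sub_self]
      · intro n
        rw [map_sub, proj_coeff hb]
        by_cases hn : n ∈ Λ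
        · simp [hn]
        · simp only [if_neg hn, sub_zero]
          exact hΛ k hkΛ n hn
    exact key.trans (IH (Λ.erase k) (Finset.erase_ssubset hkΛ) hgreedy')
end
end

section
/- A basis is 1-(1, RPSLC) if and only if it satisfies both: (i) ‖x‖ ≤ ‖x + e_k‖ for all x with ‖x‖_∞ ≤ 1 and k ∉ supp(x); and (ii) ‖x + t·e_k‖ ≤ ‖x + s·e_j‖ for all x with ‖x‖_∞ ≤ 1, all scalars s, t with |s| = |t| = 1, and all j < k with j, k ∉ supp(x). -/
open Finset Filter

noncomputable section

variable {X : Type*} [NormedAddCommGroup X] [NormedSpace ℝ X]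

/-- Functional applied to a vector plus a signed sum of basis vectors. -/
lemma fsum_aux (f : ℕ → X →L[ℝ] ℝ) (e : ℕ → X)
    (hbi : ∀ n m, f n (e m) = if n = m then (1 : ℝ) else 0)
    (B : Finset ℕ) (δ : ℕ → ℝ) (n : ℕ) (x : X) :
    f n (x + ∑ m ∈ B, δ m • e m) = f n x + (if n ∈ B then δ n else 0) := by
  rw [map_add, map_sum]
  congr 1
  simp only [map_smul, hbi, smul_eq_mul, mul_ite, mul_one, mul_zero]
  exact Finset.sum_ite_eq B n δ

lemma addOne_aux (f : ℕ → X →L[ℝ] ℝ) (e : ℕ → X)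
    (hi : ∀ x : X, (∀ n, |f n x| ≤ 1) → ∀ k, f k x = 0 → ‖x‖ ≤ ‖x + e k‖)
    (x : X) (hx : ∀ n, |f n x| ≤ 1) (k : ℕ) (s : ℝ) (hs : |s| = 1)
    (hk : f k x = 0) : ‖x‖ ≤ ‖x + s • e k‖ := by
  rcases (abs_eq (by norm_num : (0:ℝ) ≤ 1)).mp hs with h | h
  · subst h; simpa using hi x hx k hk
  · subst h
    have h1 : ∀ n, |f n (-x)| ≤ 1 := by intro n; simpa using hx n
    have h2 : f k (-x) = 0 := by simp [hk]
    have := hi (-x) h1 k h2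
    have heq : ‖-x + e k‖ = ‖x + (-1 : ℝ) • e k‖ := by
      rw [← norm_neg]; congr 1; module
    rw [norm_neg] at this
    rw [heq] at this; exact this

lemma addSet_aux (f : ℕ → X →L[ℝ] ℝ) (e : ℕ → X)
    (hbi : ∀ n m, f n (e m) = if n = m then (1 : ℝ) else 0)
    (hi : ∀ x : X, (∀ n, |f n x| ≤ 1) → ∀ k, f k x = 0 → ‖x‖ ≤ ‖x + e k‖)
    (δ : ℕ → ℝ) (hδ : ∀ n, |δ n| = 1) (B : Finset ℕ) :
    ∀ x : X, (∀ n, |f n x| ≤ 1) → (∀ n ∈ B, f n x = 0) →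
      ‖x‖ ≤ ‖x + ∑ n ∈ B, δ n • e n‖ := by
  induction B using Finset.induction_on with
  | empty => intro x _ _; simp
  | @insert b B hbB ih =>
    intro x hx h0
    have hIH : ‖x‖ ≤ ‖x + ∑ n ∈ B, δ n • e n‖ :=
      ih x hx (fun n hn => h0 n (Finset.mem_insert_of_mem hn))
    set y := x + ∑ n ∈ B, δ n • e n with hy
    have hfy : ∀ n, f n y = f n x + (if n ∈ B then δ n else 0) :=
      fun n => fsum_aux f e hbi B δ n x
    have hy1 : ∀ n, |f n y| ≤ 1 := by
      intro n; rw [hfy n]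
      by_cases hn : n ∈ B
      · rw [h0 n (Finset.mem_insert_of_mem hn)]; simp [hn, (hδ n).le]
      · simp [hn, hx n]
    have hyb : f b y = 0 := by
      rw [hfy b]; simp [hbB, h0 b (Finset.mem_insert_self b B)]
    have := addOne_aux f e hi y hy1 b (δ b) (hδ b) hyb
    calc ‖x‖ ≤ ‖y‖ := hIH
    _ ≤ ‖y + δ b • e b‖ := this
    _ = ‖x + ∑ n ∈ insert b B, δ n • e n‖ := by
        rw [Finset.sum_insert hbB, hy]; congr 1; abel

lemma main_aux (f : ℕ → X →L[ℝ] ℝ) (e : ℕ → X)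
    (hbi : ∀ n m, f n (e m) = if n = m then (1 : ℝ) else 0)
    (hi : ∀ x : X, (∀ n, |f n x| ≤ 1) → ∀ k, f k x = 0 → ‖x‖ ≤ ‖x + e k‖)
    (hii : ∀ x : X, (∀ n, |f n x| ≤ 1) → ∀ s t : ℝ, |s| = 1 → |t| = 1 →
      ∀ j k : ℕ, j < k → f j x = 0 → f k x = 0 → ‖x + t • e k‖ ≤ ‖x + s • e j‖)
    (ε δ : ℕ → ℝ) (hε : ∀ n, |ε n| = 1) (hδ : ∀ n, |δ n| = 1) :
    ∀ (N : ℕ) (A B : Finset ℕ), A.card = N → A.card ≤ B.card →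
      (∀ b ∈ B, ∀ a ∈ A, b < a) →
      ∀ x : X, (∀ n, |f n x| ≤ 1) → (∀ n ∈ B, f n x = 0) →
      (∀ a ∈ A, ∀ b ∈ A, ∀ n, a ≤ n → n ≤ b → f n x = 0) →
      ‖x + ∑ n ∈ A, ε n • e n‖ ≤ ‖x + ∑ n ∈ B, δ n • e n‖ := by
  intro N
  induction N with
  | zero =>
    intro A B hA _ _ x hx h0 _
    rw [Finset.card_eq_zero] at hA
    subst hA
    simpa using addSet_aux f e hbi hi δ hδ B x hx h0
  | succ N ih =>
    intro A B hA hAB hBA x hx h0B hsur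
    have hAne : A.Nonempty := Finset.card_pos.mp (by omega)
    have hBne : B.Nonempty := Finset.card_pos.mp (by omega)
    obtain ⟨a, ha⟩ := hAne
    obtain ⟨b, hbB⟩ := hBne
    have hfailA : ∀ n ∈ A, f n x = 0 := fun n hn => hsur n hn n hn n le_rfl le_rfl
    have hba : b < a := hBA b hbB a ha
    set A' := A.erase a with hA'
    set B' := B.erase b with hB'
    have hcA' : A'.card = N := by
      rw [hA', Finset.card_erase_of_mem ha, hA]
      omega
    have hcB' : A'.card ≤ B'.card := by
      rw [hcA', hB', Finset.card_erase_of_mem hbB]; omega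
    -- step 1: replace ε a • e a by δ b • e b using (ii)
    set z := x + ∑ n ∈ A', ε n • e n with hz
    have hfz : ∀ n, f n z = f n x + (if n ∈ A' then ε n else 0) :=
      fun n => fsum_aux f e hbi A' ε n x
    have hz1 : ∀ n, |f n z| ≤ 1 := by
      intro n; rw [hfz n]
      by_cases hn : n ∈ A'
      · rw [hfailA n (Finset.mem_of_mem_erase hn)]; simp [hn, (hε n).le]
      · simp [hn, hx n]
    have hbz : f b z = 0 := by
      rw [hfz b]
      have : b ∉ A' := fun h => absurd (hBA b hbB b (Finset.mem_of_mem_erase h)) (lt_irrefl b)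
      simp [this, h0B b hbB]
    have haz : f a z = 0 := by
      have hna : a ∉ A' := by rw [hA']; exact Finset.notMem_erase a A
      rw [hfz a]; simp [hna, hfailA a ha]
    have step1 : ‖z + ε a • e a‖ ≤ ‖z + δ b • e b‖ :=
      hii z hz1 (δ b) (ε a) (hδ b) (hε a) b a hba hbz haz
    -- step 2: apply IH with x' = x + δ b • e b
    set x' := x + δ b • e b with hx'
    have hfx' : ∀ n, f n x' = f n x + (if n = b then δ n else 0) := by
      intro n
      simp only [hx', map_add, map_smul, smul_eq_mul, hbi]
      by_cases h : n = b <;> simp [h]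
    have hx'1 : ∀ n, |f n x'| ≤ 1 := by
      intro n; rw [hfx' n]
      by_cases hn : n = b
      · subst hn; rw [h0B n hbB]; simp [(hδ n).le]
      · simp [hn, hx n]
    have h0B' : ∀ n ∈ B', f n x' = 0 := by
      intro n hn
      rw [hfx' n]
      simp [Finset.ne_of_mem_erase hn, h0B n (Finset.mem_of_mem_erase hn)]
    have hsur' : ∀ a₁ ∈ A', ∀ b₁ ∈ A', ∀ n, a₁ ≤ n → n ≤ b₁ → f n x' = 0 := by
      intro a₁ ha₁ b₁ hb₁ n hn1 hn2
      rw [hfx' n]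
      have hnb : n ≠ b := by
        have := hBA b hbB a₁ (Finset.mem_of_mem_erase ha₁); omega
      simp [hnb,
        hsur a₁ (Finset.mem_of_mem_erase ha₁) b₁ (Finset.mem_of_mem_erase hb₁) n hn1 hn2]
    have hBA' : ∀ b₁ ∈ B', ∀ a₁ ∈ A', b₁ < a₁ := fun b₁ hb₁ a₁ ha₁ =>
      hBA b₁ (Finset.mem_of_mem_erase hb₁) a₁ (Finset.mem_of_mem_erase ha₁)
    have step2 : ‖x' + ∑ n ∈ A', ε n • e n‖ ≤ ‖x' + ∑ n ∈ B', δ n • e n‖ :=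
      ih A' B' hcA' hcB' hBA' x' hx'1 h0B' hsur'
    have e1 : x + ∑ n ∈ A, ε n • e n = z + ε a • e a := by
      rw [hz, ← Finset.sum_erase_add A _ ha, ← hA']; abel
    have e2 : z + δ b • e b = x' + ∑ n ∈ A', ε n • e n := by
      rw [hz, hx']; abel
    have e3 : x' + ∑ n ∈ B', δ n • e n = x + ∑ n ∈ B, δ n • e n := by
      rw [hx', ← Finset.sum_erase_add B _ hbB, ← hB']; abel
    calc ‖x + ∑ n ∈ A, ε n • e n‖ = ‖z + ε a • e a‖ := by rw [e1]
    _ ≤ ‖z + δ b • e b‖ := step1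
    _ = ‖x' + ∑ n ∈ A', ε n • e n‖ := by rw [e2]
    _ ≤ ‖x' + ∑ n ∈ B', δ n • e n‖ := step2
    _ = ‖x + ∑ n ∈ B, δ n • e n‖ := by rw [e3]

/-- 1-(1, RPSLC) iff conditions (i) and (ii). -/
theorem stmt_12 (f : ℕ → X →L[ℝ] ℝ) (e : ℕ → X) (hb : BasisSystem f e) :
    RPSLC f e 1 1 ↔
      ((∀ x : X, (∀ n, |f n x| ≤ 1) → ∀ k, f k x = 0 → ‖x‖ ≤ ‖x + e k‖) ∧
       (∀ x : X, (∀ n, |f n x| ≤ 1) → ∀ s t : ℝ, |s| = 1 → |t| = 1 →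
         ∀ j k : ℕ, j < k → f j x = 0 → f k x = 0 →
           ‖x + t • e k‖ ≤ ‖x + s • e j‖)) := by
  constructor
  · intro h
    constructor
    · intro x hx k hk
      have := h x hx (fun _ => 1) (fun _ => 1) (fun _ => abs_one) (fun _ => abs_one)
        ∅ {k} (by simp [spread]) (by simpa using hk) (by simp)
        (by intro a ha; simp at ha)
      simpa using this
    · intro x hx s t hs ht j k hjk hj hk
      have hsur : Surrounds f x {k} := by
        intro a ha b hb n h1 h2
        simp only [Finset.mem_singleton] at ha hb
        have hnk : n = k := le_antisymm (hb ▸ h2) (ha ▸ h1)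
        rw [hnk]; exact hk
      have := h x hx (fun _ => t) (fun _ => s) (fun _ => ht) (fun _ => hs)
        {k} {j} (by simp) (by simpa using hj)
        (by intro b hb a ha; simp only [Finset.mem_singleton] at hb ha; omega) hsur
      simpa using this
  · rintro ⟨hi, hii⟩
    intro x hx ε δ hε hδ A B hcard h0B hBA hsur
    have hAB : A.card ≤ B.card := by
      have : (1 - 1 : ℝ) * spread A + (A.card : ℝ) = (A.card : ℝ) := by ring
      rw [this] at hcard
      exact_mod_cast hcard
    rw [one_mul]
    exact main_aux f e hb.biorth hi hii ε δ hε hδ A.card A B rfl hAB hBA x hx h0B hsur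
end
end

section
/- Let λ > 1. Every RPG basis is (λ, RPGII). -/
open Finset Filter

noncomputable section

variable {X : Type*} [NormedAddCommGroup X] [NormedSpace ℝ X]

/-! An RPG basis is suppression quasi-greedy (compare with `A = ∅` in `σ̃`) and reverse
conservative (test RPG on `1_{A ∪ B}` with the greedy set `B`).

Let `Λ` be greedy for `x` with `|Λ| = ⌈λm⌉` and `I` an admissible interval. With
`y = x - P_I x`, `G = Λ \ I` and `A = I \ Λ` we have `x - P_Λ x = (y - P_G y) + P_A x`, and `G`
is greedy for `y`, so the first term is `≲ ‖y‖`. Since `Λ ≤ max I` we get `G < A`, and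
`|I| ≤ m ≤ λm ≤ |Λ|` gives `(λ - 1) s(D) + |D| ≤ |G|` for `D ⊆ A`; by convexity
`‖P_A x‖ ≲ t ‖1_G‖` with `t = min_Λ |e_n^*(x)|`. Finally `t ‖1_G‖ ≲ ‖y‖` is the usual
quasi-greedy estimate, proved by Abel summation along the greedy ordering of `G`. -/

def Biorthogonal (f : ℕ → X →L[ℝ] ℝ) (e : ℕ → X) : Prop :=
  ∀ n m, f n (e m) = if n = m then (1 : ℝ) else 0

section Convexity

variable {ι : Type*}

theorem norm_sum_smul_le_mul_of_upperClosed (A : Finset ι) (v : ι → X) (a : ι → ℝ) {t M : ℝ}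
    (ht : 0 ≤ t) (ha : ∀ i ∈ A, 0 ≤ a i ∧ a i ≤ t)
    (hM : ∀ D ⊆ A, (∀ i ∈ D, ∀ j ∈ A, a i < a j → j ∈ D) → ‖∑ i ∈ D, v i‖ ≤ M) :
    ‖∑ i ∈ A, a i • v i‖ ≤ t * M := by
  classical
  induction A using Finset.strongInduction generalizing a t with
  | H A ih =>
  obtain rfl | hA := A.eq_empty_or_nonempty
  · have hM0 : 0 ≤ M := by simpa using hM ∅ subset_rfl (by simp)
    simpa using mul_nonneg ht hM0
  obtain ⟨i₀, hi₀, hmin⟩ := A.exists_min_image a hA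
  have hsplit : ∑ i ∈ A, a i • v i
      = a i₀ • ∑ i ∈ A, v i + ∑ i ∈ A.erase i₀, (a i - a i₀) • v i := by
    rw [sum_erase _ (by simp), smul_sum, ← sum_add_distrib]
    exact sum_congr rfl fun i _ => by rw [sub_smul, add_sub_cancel]
  have hrest : ‖∑ i ∈ A.erase i₀, (a i - a i₀) • v i‖ ≤ (t - a i₀) * M := by
    refine ih _ (erase_ssubset hi₀) _ (sub_nonneg.2 (ha i₀ hi₀).2)
      (fun i hi => ⟨sub_nonneg.2 (hmin i (mem_of_mem_erase hi)),
        sub_le_sub_right (ha i (mem_of_mem_erase hi)).2 _⟩)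
      fun D hD hDc => hM D (hD.trans (erase_subset _ _)) fun i hi j hj hij => ?_
    have hji₀ : j ≠ i₀ := by
      rintro rfl
      exact (hmin i (mem_of_mem_erase (hD hi))).not_gt hij
    exact hDc i hi j (mem_erase.2 ⟨hji₀, hj⟩) (sub_lt_sub_right hij _)
  have hfirst : ‖a i₀ • ∑ i ∈ A, v i‖ ≤ a i₀ * M := by
    rw [norm_smul, Real.norm_of_nonneg (ha i₀ hi₀).1]
    exact mul_le_mul_of_nonneg_left (hM A subset_rfl fun _ _ _ hj _ => hj) (ha i₀ hi₀).1
  calc ‖∑ i ∈ A, a i • v i‖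
      ≤ ‖a i₀ • ∑ i ∈ A, v i‖ + ‖∑ i ∈ A.erase i₀, (a i - a i₀) • v i‖ :=
        hsplit ▸ norm_add_le _ _
    _ ≤ a i₀ * M + (t - a i₀) * M := add_le_add hfirst hrest
    _ = t * M := by ring

theorem norm_sum_smul_le_two_mul_of_lowerClosed (A : Finset ι) (v : ι → X) (a : ι → ℝ)
    {t M : ℝ} (ht : 0 ≤ t) (ha : ∀ i ∈ A, 0 ≤ a i ∧ a i ≤ t)
    (hM : ∀ D ⊆ A, (∀ i ∈ D, ∀ j ∈ A, a j < a i → j ∈ D) → ‖∑ i ∈ D, v i‖ ≤ M) :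
    ‖∑ i ∈ A, a i • v i‖ ≤ 2 * t * M := by
  have hsplit : ∑ i ∈ A, a i • v i = t • ∑ i ∈ A, v i - ∑ i ∈ A, (t - a i) • v i := by
    rw [smul_sum, ← sum_sub_distrib]
    exact sum_congr rfl fun i _ => by rw [sub_smul, sub_sub_cancel]
  have hfirst : ‖t • ∑ i ∈ A, v i‖ ≤ t * M := by
    rw [norm_smul, Real.norm_of_nonneg ht]
    exact mul_le_mul_of_nonneg_left (hM A subset_rfl fun _ _ _ hj _ => hj) ht
  have hsecond : ‖∑ i ∈ A, (t - a i) • v i‖ ≤ t * M :=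
    norm_sum_smul_le_mul_of_upperClosed A v (fun i => t - a i) ht
      (fun i hi => ⟨sub_nonneg.2 (ha i hi).2, sub_le_self _ (ha i hi).1⟩)
      fun D hD hDc => hM D hD fun i hi j hj hij => hDc i hi j hj (sub_lt_sub_left hij _)
  calc ‖∑ i ∈ A, a i • v i‖ ≤ ‖t • ∑ i ∈ A, v i‖ + ‖∑ i ∈ A, (t - a i) • v i‖ :=
        hsplit ▸ norm_sub_le _ _
    _ ≤ t * M + t * M := add_le_add hfirst hsecond
    _ = 2 * t * M := by ring

theorem norm_sum_smul_le_two_mul (A : Finset ι) (v : ι → X) (a : ι → ℝ) {t M : ℝ}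
    (ht : 0 ≤ t) (ha : ∀ i ∈ A, |a i| ≤ t) (hM : ∀ D ⊆ A, ‖∑ i ∈ D, v i‖ ≤ M) :
    ‖∑ i ∈ A, a i • v i‖ ≤ 2 * t * M := by
  have hsplit : ∑ i ∈ A, a i • v i = ∑ i ∈ A, (a i)⁺ • v i - ∑ i ∈ A, (a i)⁻ • v i := by
    rw [← sum_sub_distrib]
    exact sum_congr rfl fun i _ => by rw [← sub_smul, posPart_sub_negPart]
  have hpos := norm_sum_smul_le_mul_of_upperClosed A v (fun i => (a i)⁺) ht
    (fun i hi => ⟨posPart_nonneg _, sup_le ((le_abs_self _).trans (ha i hi)) ht⟩)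
    fun D hD _ => hM D hD
  have hneg := norm_sum_smul_le_mul_of_upperClosed A v (fun i => (a i)⁻) ht
    (fun i hi => ⟨negPart_nonneg _, sup_le ((neg_le_abs _).trans (ha i hi)) ht⟩)
    fun D hD _ => hM D hD
  calc ‖∑ i ∈ A, a i • v i‖
      ≤ ‖∑ i ∈ A, (a i)⁺ • v i‖ + ‖∑ i ∈ A, (a i)⁻ • v i‖ := hsplit ▸ norm_sub_le _ _
    _ ≤ t * M + t * M := add_le_add hpos hneg
    _ = 2 * t * M := by ring

end Convexity

section Coefficients

variable {f : ℕ → X →L[ℝ] ℝ} {e : ℕ → X}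

lemma apply_sum_smul (hbi : Biorthogonal f e) (c : ℕ → ℝ) (A : Finset ℕ) (n : ℕ) :
    f n (∑ k ∈ A, c k • e k) = if n ∈ A then c n else 0 := by
  simp only [map_sum, map_smul, hbi n, smul_eq_mul, mul_ite, mul_one, mul_zero]
  exact sum_ite_eq A n c

lemma apply_sub_proj (hbi : Biorthogonal f e) (I : Finset ℕ) (x : X) (n : ℕ) :
    f n (x - proj f e I x) = if n ∈ I then 0 else f n x := by
  rw [map_sub, proj, apply_sum_smul hbi]
  split_ifs <;> simp

lemma proj_sum_smul (hbi : Biorthogonal f e) {A D : Finset ℕ} (hDA : D ⊆ A) (c : ℕ → ℝ) :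
    proj f e D (∑ k ∈ A, c k • e k) = ∑ k ∈ D, c k • e k :=
  sum_congr rfl fun k hk => by rw [apply_sum_smul hbi, if_pos (hDA hk)]

lemma sub_proj_sum_smul (hbi : Biorthogonal f e) {A D : Finset ℕ} (hDA : D ⊆ A) (c : ℕ → ℝ) :
    ∑ k ∈ A, c k • e k - proj f e D (∑ k ∈ A, c k • e k) = ∑ k ∈ A \ D, c k • e k := by
  rw [proj_sum_smul hbi hDA, ← sum_sdiff hDA, add_sub_cancel_right]

lemma greedySet_sum_smul (hbi : Biorthogonal f e) {A D : Finset ℕ} (hDA : D ⊆ A) {c : ℕ → ℝ}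
    (hc : ∀ k ∈ A, |c k| = 1) : GreedySet f (∑ k ∈ A, c k • e k) D := by
  intro n hn m _
  rw [apply_sum_smul hbi, apply_sum_smul hbi, if_pos (hDA hn), hc n (hDA hn)]
  split_ifs with hm
  · rw [hc m hm]
  · simp

lemma GreedySet.sdiff_of_sub_proj (hbi : Biorthogonal f e) {x : X} {Λ : Finset ℕ}
    (hΛ : GreedySet f x Λ) (I : Finset ℕ) : GreedySet f (x - proj f e I x) (Λ \ I) := by
  intro n hn m hm
  rw [Finset.mem_sdiff] at hn
  rw [apply_sub_proj hbi, apply_sub_proj hbi, if_neg hn.2]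
  split_ifs with hmI
  · simp
  · exact hΛ n hn.1 m fun hmΛ => hm (Finset.mem_sdiff.2 ⟨hmΛ, hmI⟩)

lemma GreedySet.exists_threshold {x : X} {Λ : Finset ℕ} (hΛ : GreedySet f x Λ) (A : Finset ℕ)
    (hA : Disjoint A Λ) :
    ∃ t, 0 ≤ t ∧ (∀ n ∈ A, |f n x| ≤ t) ∧ ∀ n ∈ Λ, t ≤ |f n x| := by
  obtain rfl | hne := Λ.eq_empty_or_nonempty
  · exact ⟨∑ n ∈ A, |f n x|, sum_nonneg fun _ _ => abs_nonneg _,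
      fun n hn => Finset.single_le_sum (f := fun n => |f n x|) (fun _ _ => abs_nonneg _) hn,
      by simp⟩
  exact ⟨Λ.inf' hne fun n => |f n x|, le_inf' hne _ fun _ _ => abs_nonneg _,
    fun n hn => le_inf' hne _ fun k hk => hΛ k hk n (disjoint_left.1 hA hn),
    fun n hn => inf'_le _ hn⟩

lemma sub_proj_eq_sub_proj_sdiff_add (hbi : Biorthogonal f e) (x : X) (Λ I : Finset ℕ) :
    x - proj f e Λ x = (x - proj f e I x) - proj f e (Λ \ I) (x - proj f e I x)
      + proj f e (I \ Λ) x := by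
  classical
  have hG : proj f e (Λ \ I) (x - proj f e I x) = proj f e (Λ \ I) x :=
    sum_congr rfl fun n hn => by rw [apply_sub_proj hbi, if_neg (Finset.mem_sdiff.1 hn).2]
  have hΛ : proj f e (Λ ∩ I) x + proj f e (Λ \ I) x = proj f e Λ x :=
    sum_inter_add_sum_sdiff _ _ _
  have hI : proj f e (I ∩ Λ) x + proj f e (I \ Λ) x = proj f e I x :=
    sum_inter_add_sum_sdiff _ _ _
  rw [hG, ← hΛ, ← hI, inter_comm]
  abel

end Coefficients

section QuasiGreedy

variable {f : ℕ → X →L[ℝ] ℝ} {e : ℕ → X}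

lemma SuppQG.qg {C : ℝ} (h : SuppQG f e C) : QG f e (C + 1) := fun x Λ hΛ =>
  calc ‖proj f e Λ x‖ = ‖x - (x - proj f e Λ x)‖ := by rw [sub_sub_cancel]
    _ ≤ ‖x‖ + ‖x - proj f e Λ x‖ := norm_sub_le _ _
    _ ≤ (C + 1) * ‖x‖ := by linarith [h x Λ hΛ]

/-- `1_G = ∑_{n ∈ G} s_n (s_n e_n)`, and for `D ⊆ G` the sum `∑_{n ∈ D} s_n e_n` is the
projection of `∑_{n ∈ G} s_n e_n` onto the greedy set `D`. -/
lemma norm_sum_le_of_abs_eq_one (hbi : Biorthogonal f e) {K : ℝ} (hq : QG f e K)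
    (G : Finset ℕ) {s : ℕ → ℝ} (hs : ∀ n ∈ G, |s n| = 1) :
    ‖∑ n ∈ G, e n‖ ≤ 2 * K * ‖∑ n ∈ G, s n • e n‖ := by
  have hsq : ∑ n ∈ G, e n = ∑ n ∈ G, s n • (s n • e n) :=
    sum_congr rfl fun n hn => by rw [smul_smul, ← abs_mul_abs_self, hs n hn, one_mul, one_smul]
  have h := norm_sum_smul_le_two_mul G (fun n => s n • e n) s zero_le_one (fun n hn => (hs n hn).le)
    fun D hD => by
      rw [← proj_sum_smul hbi hD s]
      exact hq _ D (greedySet_sum_smul hbi hD hs)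
  rw [hsq]
  linarith

theorem mul_norm_sum_le_of_greedySet (hbi : Biorthogonal f e) {K : ℝ} (hq : QG f e K)
    (hK : 0 ≤ K) {y : X} {G : Finset ℕ} (hG : GreedySet f y G) {t : ℝ}
    (ht : ∀ n ∈ G, t ≤ |f n y|) : t * ‖∑ n ∈ G, e n‖ ≤ 4 * K ^ 2 * ‖y‖ := by
  rcases le_or_gt t 0 with ht0 | ht0
  · exact (mul_nonpos_of_nonpos_of_nonneg ht0 (norm_nonneg _)).trans (by positivity)
  have hy : ∀ n ∈ G, 0 < |f n y| := fun n hn => ht0.trans_le (ht n hn)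
  set w := ∑ n ∈ G, (f n y / |f n y|) • e n
  have hw : t * ‖w‖ ≤ 2 * K * ‖y‖ := by
    have htw : t • w = ∑ n ∈ G, (t / |f n y|) • (f n y • e n) := by
      rw [smul_sum]
      exact sum_congr rfl fun n _ => by
        rw [smul_smul, smul_smul, mul_div_assoc', div_mul_eq_mul_div]
    have h := norm_sum_smul_le_two_mul_of_lowerClosed G (fun n => f n y • e n)
      (fun n => t / |f n y|) zero_le_one
      (fun n hn => ⟨by positivity, div_le_one_of_le₀ (ht n hn) (abs_nonneg _)⟩)
      fun D hD hDc => hq y D fun n hn m hm => by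
        by_cases hmG : m ∈ G
        · by_contra! hlt
          exact hm (hDc n hn m hmG
            ((div_lt_div_iff_of_pos_left ht0 (hy m hmG) (hy n (hD hn))).2 hlt))
        · exact hG n (hD hn) m hmG
    rw [← htw, norm_smul, Real.norm_of_nonneg ht0.le] at h
    linarith
  have hsign := norm_sum_le_of_abs_eq_one hbi hq G (s := fun n => f n y / |f n y|)
    fun n hn => by rw [abs_div, abs_abs, div_self (hy n hn).ne']
  calc t * ‖∑ n ∈ G, e n‖ ≤ t * (2 * K * ‖w‖) := mul_le_mul_of_nonneg_left hsign ht0.le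
    _ = 2 * K * (t * ‖w‖) := by ring
    _ ≤ 2 * K * (2 * K * ‖y‖) := mul_le_mul_of_nonneg_left hw (by positivity)
    _ = 4 * K ^ 2 * ‖y‖ := by ring

theorem norm_sub_proj_le_of_sdiff (hbi : Biorthogonal f e) {C Δ : ℝ} (hs : SuppQG f e C)
    (hC : 0 ≤ C) (hΔ : 0 ≤ Δ) {x : X} {Λ I : Finset ℕ} (hΛ : GreedySet f x Λ)
    (hrc : ∀ D ⊆ I \ Λ, ‖∑ n ∈ D, e n‖ ≤ Δ * ‖∑ n ∈ Λ \ I, e n‖) :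
    ‖x - proj f e Λ x‖ ≤ (C + 8 * Δ * (C + 1) ^ 2) * ‖x - proj f e I x‖ := by
  set y := x - proj f e I x
  obtain ⟨t, ht0, htA, htΛ⟩ := hΛ.exists_threshold (I \ Λ) sdiff_disjoint
  have hA : ‖proj f e (I \ Λ) x‖ ≤ 2 * t * (Δ * ‖∑ n ∈ Λ \ I, e n‖) :=
    norm_sum_smul_le_two_mul _ e _ ht0 htA hrc
  have hG : t * ‖∑ n ∈ Λ \ I, e n‖ ≤ 4 * (C + 1) ^ 2 * ‖y‖ :=
    mul_norm_sum_le_of_greedySet hbi hs.qg (by linarith) (hΛ.sdiff_of_sub_proj hbi I)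
      fun n hn => by
        rw [apply_sub_proj hbi, if_neg (Finset.mem_sdiff.1 hn).2]
        exact htΛ n (Finset.mem_sdiff.1 hn).1
  calc ‖x - proj f e Λ x‖ = ‖y - proj f e (Λ \ I) y + proj f e (I \ Λ) x‖ := by
        rw [sub_proj_eq_sub_proj_sdiff_add hbi x Λ I]
    _ ≤ ‖y - proj f e (Λ \ I) y‖ + ‖proj f e (I \ Λ) x‖ := norm_add_le _ _
    _ ≤ C * ‖y‖ + 2 * Δ * (t * ‖∑ n ∈ Λ \ I, e n‖) := by
        gcongr
        · exact hs y _ (hΛ.sdiff_of_sub_proj hbi I)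
        · linarith
    _ ≤ C * ‖y‖ + 2 * Δ * (4 * (C + 1) ^ 2 * ‖y‖) := by gcongr
    _ = (C + 8 * Δ * (C + 1) ^ 2) * ‖y‖ := by ring

end QuasiGreedy

section ReverseConservative

variable {f : ℕ → X →L[ℝ] ℝ} {e : ℕ → X}

lemma revSigma_le {Λ A : Finset ℕ} {m : ℕ} (hA : A.card ≤ m) (hΛA : ∀ n ∈ Λ, ∀ a ∈ A, n < a)
    (x : X) : revSigma f e Λ m x ≤ ‖x - proj f e A x‖ :=
  csInf_le ⟨0, by rintro _ ⟨B, -, -, rfl⟩; exact norm_nonneg _⟩ ⟨A, hA, hΛA, rfl⟩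

lemma RPG.suppQG {C : ℝ} (hC : 0 ≤ C) (h : RPG f e C) : SuppQG f e C := fun x Λ hΛ =>
  (h x _ Λ rfl hΛ).trans <| mul_le_mul_of_nonneg_left
    ((revSigma_le (A := ∅) (by simp) (by simp) x).trans_eq (by simp [proj])) hC

lemma RPG.revConservative (hbi : Biorthogonal f e) {C : ℝ} (hC : 0 ≤ C) (h : RPG f e C) :
    RevConservative e C := by
  intro A B hBA hcard
  have hdisj : Disjoint B A :=
    disjoint_left.2 fun n hnB hnA => lt_irrefl n (hBA n hnB n hnA)
  have key := (h _ B.card B rfl (greedySet_sum_smul hbi (A := B ∪ A) (c := fun _ => 1)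
    subset_union_left (by simp))).trans (mul_le_mul_of_nonneg_left (revSigma_le hcard hBA _) hC)
  rw [sub_proj_sum_smul hbi subset_union_left, sub_proj_sum_smul hbi subset_union_right,
    union_sdiff_cancel_left hdisj, union_sdiff_cancel_right hdisj] at key
  simpa using key

end ReverseConservative

lemma spread_le_card_Icc {D : Finset ℕ} {a b : ℕ} (hD : D ⊆ Icc a b) :
    spread D ≤ (Icc a b).card := by
  unfold spread
  split_ifs with hne
  · have hmax := mem_Icc.1 (hD (D.max'_mem hne))
    have hmin := mem_Icc.1 (hD (D.min'_mem hne))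
    rw [Nat.card_Icc]
    omega
  · exact Nat.zero_le _

section TypeII

variable {Y : Type*} [NormedAddCommGroup Y] {e : ℕ → Y}

lemma RevConservative.revConsII {l C : ℝ} (hl : 1 ≤ l) (h : RevConservative e C) :
    RevConsII e l C := fun A B hAB hBA =>
  h A B hBA <| by
    have : 0 ≤ (l - 1) * spread A := mul_nonneg (sub_nonneg.2 hl) (Nat.cast_nonneg _)
    exact_mod_cast (by linarith : (A.card : ℝ) ≤ B.card)

/-- `Λ ≤ max I` gives `Λ \ I < I \ Λ`, and for `D ⊆ I \ Λ`:
`(λ - 1) s(D) + |D| ≤ (λ - 1)|I| + |I| - |I ∩ Λ| ≤ λm - |I ∩ Λ| ≤ |Λ \ I|`. -/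
lemma RevConsII.le_sdiff_Icc {l Δ : ℝ} (hl : 1 ≤ l) (hrc : RevConsII e l Δ) {Λ : Finset ℕ}
    {m a b : ℕ} (hcard : Λ.card = ⌈l * m⌉₊) (hΛb : ∀ n ∈ Λ, n ≤ b) (hI : (Icc a b).card ≤ m) :
    ∀ D ⊆ Icc a b \ Λ, ‖∑ n ∈ D, e n‖ ≤ Δ * ‖∑ n ∈ Λ \ Icc a b, e n‖ := by
  intro D hD
  refine hrc D _ ?_ fun n hn k hk => ?_
  · have hA := card_sdiff_add_card_inter (Icc a b) Λ
    have hG := card_sdiff_add_card_inter Λ (Icc a b)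
    rw [inter_comm] at hG
    have hDA := card_le_card hD
    have hspread : ((spread D : ℕ) : ℝ) ≤ m := by
      exact_mod_cast (spread_le_card_Icc (hD.trans sdiff_subset)).trans hI
    have hlm : l * m ≤ Λ.card := hcard ▸ Nat.le_ceil _
    have hIm : ((Icc a b).card : ℝ) ≤ m := by exact_mod_cast hI
    have : (l - 1) * spread D ≤ (l - 1) * m := mul_le_mul_of_nonneg_left hspread (by linarith)
    have hA' : ((Icc a b \ Λ).card : ℝ) + (Icc a b ∩ Λ).card = (Icc a b).card := by
      exact_mod_cast hA
    have hG' : ((Λ \ Icc a b).card : ℝ) + (Icc a b ∩ Λ).card = Λ.card := by exact_mod_cast hG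
    have hDA' : (D.card : ℝ) ≤ (Icc a b \ Λ).card := by exact_mod_cast hDA
    linarith
  · obtain ⟨hnΛ, hnI⟩ := Finset.mem_sdiff.1 hn
    have hak := (mem_Icc.1 (Finset.mem_sdiff.1 (hD hk)).1).1
    have hnb := hΛb n hnΛ
    rw [mem_Icc] at hnI
    omega

end TypeII

theorem rpgII_of_suppQG_of_revConsII {f : ℕ → X →L[ℝ] ℝ} {e : ℕ → X} (hbi : Biorthogonal f e)
    {l C Δ : ℝ} (hl : 1 ≤ l) (hs : SuppQG f e C) (hC : 0 ≤ C) (hrc : RevConsII e l Δ)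
    (hΔ : 0 ≤ Δ) : RPGII f e l (C + 8 * Δ * (C + 1) ^ 2) := by
  intro x m Λ hcard hΛ
  rw [checkSigma, ← smul_eq_mul, ← Real.sInf_smul_of_nonneg (by positivity)]
  refine le_csInf ⟨_, _, ⟨∅, Or.inl rfl, by simp, rfl⟩, rfl⟩ ?_
  rintro _ ⟨_, ⟨I, hI, hIm, rfl⟩, rfl⟩
  refine norm_sub_proj_le_of_sdiff hbi hs hC hΔ hΛ ?_
  rcases hI with rfl | ⟨a, b, -, rfl, hΛb⟩
  · intro D hD
    rw [empty_sdiff, subset_empty] at hD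
    subst hD
    simpa using mul_nonneg hΔ (norm_nonneg _)
  · exact hrc.le_sdiff_Icc hl hcard hΛb hIm

theorem stmt_13_general (f : ℕ → X →L[ℝ] ℝ) (e : ℕ → X)
    (hb : BasisSystem f e) (l : ℝ) (hl : 1 < l)
    (h : ∃ C : ℝ, 1 ≤ C ∧ RPG f e C) :
    ∃ C : ℝ, 1 ≤ C ∧ RPGII f e l C := by
  obtain ⟨C, hC, hrpg⟩ := h
  have hC0 : 0 ≤ C := zero_le_one.trans hC
  refine ⟨C + 8 * C * (C + 1) ^ 2, le_add_of_le_of_nonneg hC (by positivity), ?_⟩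
  exact rpgII_of_suppQG_of_revConsII hb.biorth hl.le (hrpg.suppQG hC0) hC0
    ((hrpg.revConservative hb.biorth hC0).revConsII hl.le) hC0

/-- for `λ > 1`, every RPG basis is (λ, RPGII). -/
theorem stmt_13 [CompleteSpace X] (f : ℕ → X →L[ℝ] ℝ) (e : ℕ → X)
    (hb : BasisSystem f e) (l : ℝ) (hl : 1 < l)
    (h : ∃ C : ℝ, 1 ≤ C ∧ RPG f e C) :
    ∃ C : ℝ, 1 ≤ C ∧ RPGII f e l C :=
  stmt_13_general f e hb l hl h
end
end

section
/- Let X be the completion of c_00 under the norm ‖x‖ = sup_{π,π'} (Σ_{n∈D} u_{π(n)}|x_n| + Σ_{n∉D} v_{π'(n)}|x_n|), where D = {2^n : n ≥ 0}, u_n = 1/√n, v_n = 1/n, and π: D → ℕ, π': ℕ\D → ℕ range over bijections. Then the canonical basis of X is not reverse conservative: with A_N = {2^{2N+1}, …, 2^{3N}} and B_N = {3, 3², …, 3^N}, one has B_N < A_N, |A_N| = |B_N| = N, ‖1_{A_N}‖ = Σ_{n=1}^N 1/√n, ‖1_{B_N}‖ = Σ_{n=1}^N 1/n, and ‖1_{A_N}‖/‖1_{B_N}‖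 → ∞. -/
open Finset Filter

noncomputable section

/-- The set `D = {2^k : k ≥ 0}`. -/
def Dset : Set ℕ := {n | ∃ k : ℕ, n = 2 ^ k}

attribute [local instance] Classical.propDecidable

/-- The norm `‖x‖ = sup_{π,π'} (∑_{n ∈ D} |x_n|/√(π(n)) + ∑_{n ∉ D} |x_n|/π'(n))`,
where `π : D → {1,2,…}` and `π' : ℕ∖D → {1,2,…}` range over bijections
(here realized as equivalences onto `ℕ = {0,1,…}`, with weights shifted by 1). -/
def Nrm (x : ℕ →₀ ℝ) : ℝ :=
  ⨆ (π : Dset ≃ ℕ) (π' : ↥(Dsetᶜ) ≃ ℕ),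
    ∑ n ∈ x.support,
      if h : n ∈ Dset then |x n| / Real.sqrt ((π ⟨n, h⟩ : ℝ) + 1)
      else |x n| / ((π' ⟨n, h⟩ : ℝ) + 1)

/-- `1_A` as a finitely supported sequence. -/
def ind (A : Finset ℕ) : ℕ →₀ ℝ := ∑ n ∈ A, Finsupp.single n (1 : ℝ)

/-- `A_N = {2^{2N+1}, …, 2^{3N}}`. -/
def AN (N : ℕ) : Finset ℕ := (Finset.Icc (2 * N + 1) (3 * N)).image (fun k => 2 ^ k)

/-- `B_N = {3, 3², …, 3^N}`. -/
def BN (N : ℕ) : Finset ℕ := (Finset.Icc 1 N).image (fun k => 3 ^ k)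

/-! For a set `A` contained in `D` only the decreasing weights `1/√k` matter (and for `A`
disjoint from `D` only the weights `1/k`), so the supremum over bijections is attained by one
sending `A` onto the first `#A` positions: `‖1_A‖` is the `#A`-th partial sum of the
corresponding series. The blocks `A_N ⊆ D` and `B_N ⊆ ℕ ∖ D` thus have norms at least `√N`
and at most `1 + log N` respectively, although `B_N` lies entirely before `A_N`. -/

theorem Finset.exists_equiv_map_eq_range {α : Type*} [Countable α] [Infinite α] (A : Finset α) :
    ∃ π : α ≃ ℕ, A.map π.toEmbedding = range #A := by
  classical
  obtain ⟨e⟩ := nonempty_equiv_of_countable (α := α) (β := ℕ)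
  set S := A.map e.toEmbedding
  have : Infinite {n // n ∉ S} := S.finite_toSet.infinite_compl.to_subtype
  have : Infinite {n // n ∉ range #A} := (range #A).finite_toSet.infinite_compl.to_subtype
  let σ : Equiv.Perm ℕ := Equiv.subtypeCongr (S.equivOfCardEq (t := range #A) (by simp [S]))
    nonempty_equiv_of_countable.some
  refine ⟨e.trans σ, eq_of_subset_of_card_le ?_ (by simp)⟩
  intro n hn
  obtain ⟨a, ha, rfl⟩ := mem_map.mp hn
  have hS : e a ∈ S := mem_map_of_mem _ ha
  simp [σ, Equiv.subtypeCongr, Equiv.sumCompl, hS]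

theorem Finset.sum_le_sum_range_card_of_antitone {M : Type*} [AddCommMonoid M] [PartialOrder M]
    [IsOrderedAddMonoid M] {w : ℕ → M} (hw : Antitone w) (s : Finset ℕ) :
    ∑ k ∈ s, w k ≤ ∑ k ∈ range #s, w k := by
  induction s using Finset.induction_on_max with
  | empty => simp
  | insert a s ha ih =>
    have has : a ∉ s := fun h => lt_irrefl a (ha a h)
    have hcard : #s ≤ a := by
      simpa using card_le_card (fun x hx => mem_range.mpr (ha x hx) : s ⊆ range a)
    rw [sum_insert has, card_insert_of_notMem has, sum_range_succ, add_comm]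
    exact add_le_add ih (hw hcard)

theorem iSup_equiv_sum_antitone {α M : Type*} [Countable α] [Infinite α]
    [ConditionallyCompleteLattice M] [AddCommMonoid M] [IsOrderedAddMonoid M] (A : Finset α)
    {w : ℕ → M} (hw : Antitone w) :
    ⨆ π : α ≃ ℕ, ∑ a ∈ A, w (π a) = ∑ k ∈ range #A, w k := by
  have hle (π : α ≃ ℕ) : ∑ a ∈ A, w (π a) ≤ ∑ k ∈ range #A, w k := by
    simpa using sum_le_sum_range_card_of_antitone hw (A.map π.toEmbedding)
  obtain ⟨π₀, hπ₀⟩ := A.exists_equiv_map_eq_range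
  refine le_antisymm (ciSup_le hle) (le_ciSup_of_le ⟨_, Set.forall_mem_range.mpr hle⟩ π₀ ?_)
  rw [← hπ₀, sum_map]
  rfl

theorem Finset.sum_range_succ_eq_sum_Icc {M : Type*} [AddCommMonoid M] (f : ℕ → M) (N : ℕ) :
    ∑ k ∈ range N, f (k + 1) = ∑ n ∈ Icc 1 N, f n := by
  rw [range_eq_Ico, sum_Ico_add', zero_add, Ico_add_one_right_eq_Icc]

lemma ind_apply (A : Finset ℕ) (n : ℕ) : ind A n = if n ∈ A then 1 else 0 := by
  simp [ind, Finsupp.finsetSum_apply, Finsupp.single_apply]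

lemma support_ind (A : Finset ℕ) : (ind A).support = A := by
  ext n
  simp [ind_apply]

lemma Nrm_ind (A : Finset ℕ) : Nrm (ind A) = ⨆ (π : Dset ≃ ℕ) (π' : ↥Dsetᶜ ≃ ℕ),
    ∑ n ∈ A, if h : n ∈ Dset then 1 / √((π ⟨n, h⟩ : ℝ) + 1) else 1 / ((π' ⟨n, h⟩ : ℝ) + 1) := by
  unfold Nrm
  rw [support_ind]
  refine iSup_congr fun π => iSup_congr fun π' => sum_congr rfl fun n hn => ?_
  simp [ind_apply, hn]

lemma Dset_infinite : Dset.Infinite :=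
  Set.infinite_of_injective_forall_mem (Nat.pow_right_injective le_rfl) fun k => ⟨k, rfl⟩

lemma three_pow_notMem_Dset {k : ℕ} (hk : k ≠ 0) : 3 ^ k ∉ Dset := by
  rintro ⟨_ | m, hm⟩
  · exact hk (Nat.pow_eq_one.mp hm |>.resolve_left (by norm_num))
  · have hodd : Odd (3 ^ k) := Odd.pow (by decide)
    rw [hm, pow_succ] at hodd
    exact Nat.not_even_iff_odd.mpr hodd (even_two.mul_left _)

lemma Dset_compl_infinite : Dsetᶜ.Infinite :=
  Set.infinite_of_injective_forall_mem
    ((Nat.pow_right_injective (by norm_num)).comp Nat.succ_injective) fun k => three_pow_notMem_Dset k.succ_ne_zero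

instance : Infinite Dset := Dset_infinite.to_subtype
instance : Infinite ↥Dsetᶜ := Dset_compl_infinite.to_subtype

lemma Nrm_ind_of_subset_Dset {A : Finset ℕ} (hA : ∀ a ∈ A, a ∈ Dset) :
    Nrm (ind A) = ∑ n ∈ Icc 1 #A, 1 / √(n : ℝ) := by
  have hsum (π : Dset ≃ ℕ) (π' : ↥Dsetᶜ ≃ ℕ) :
      (∑ n ∈ A, if h : n ∈ Dset then 1 / √((π ⟨n, h⟩ : ℝ) + 1) else 1 / ((π' ⟨n, h⟩ : ℝ) + 1))
        = ∑ a ∈ A.subtype (· ∈ Dset), 1 / √((π a : ℝ) + 1) := by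
    rw [← sum_subtype_of_mem _ hA]
    exact sum_congr rfl fun a _ => by simp [a.2]
  have hw : Antitone fun k : ℕ => 1 / √((k : ℝ) + 1) := fun a b hab => by
    dsimp only
    gcongr
  simp_rw [Nrm_ind, hsum, ciSup_const]
  rw [iSup_equiv_sum_antitone _ hw, card_subtype, filter_true_of_mem hA,
    ← sum_range_succ_eq_sum_Icc]
  push_cast
  rfl

lemma Nrm_ind_of_forall_notMem_Dset {B : Finset ℕ} (hB : ∀ b ∈ B, b ∉ Dset) :
    Nrm (ind B) = ∑ n ∈ Icc 1 #B, 1 / (n : ℝ) := by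
  have hsum (π : Dset ≃ ℕ) (π' : ↥Dsetᶜ ≃ ℕ) :
      (∑ n ∈ B, if h : n ∈ Dset then 1 / √((π ⟨n, h⟩ : ℝ) + 1) else 1 / ((π' ⟨n, h⟩ : ℝ) + 1))
        = ∑ b ∈ B.subtype (· ∈ Dsetᶜ), 1 / ((π' b : ℝ) + 1) := by
    rw [← sum_subtype_of_mem _ hB]
    exact sum_congr rfl fun b _ => by simp [b.2]
  have hw : Antitone fun k : ℕ => 1 / ((k : ℝ) + 1) := fun a b hab => by
    dsimp only
    gcongr
  simp_rw [Nrm_ind, hsum, ciSup_const]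
  rw [iSup_equiv_sum_antitone _ hw, card_subtype, filter_true_of_mem (p := (· ∈ Dsetᶜ)) hB,
    ← sum_range_succ_eq_sum_Icc]
  push_cast
  rfl

lemma card_AN (N : ℕ) : #(AN N) = N := by
  rw [AN, card_image_of_injective _ (Nat.pow_right_injective le_rfl), Nat.card_Icc]
  omega

lemma card_BN (N : ℕ) : #(BN N) = N := by
  rw [BN, card_image_of_injective _ (Nat.pow_right_injective (by norm_num)), Nat.card_Icc]
  omega

lemma AN_subset_Dset (N : ℕ) : ∀ a ∈ AN N, a ∈ Dset := by
  simp only [AN, mem_image]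
  rintro _ ⟨k, -, rfl⟩
  exact ⟨k, rfl⟩

lemma BN_notMem_Dset (N : ℕ) : ∀ b ∈ BN N, b ∉ Dset := by
  simp only [BN, mem_image, mem_Icc]
  rintro _ ⟨k, hk, rfl⟩
  exact three_pow_notMem_Dset (by omega)

lemma Nrm_ind_AN (N : ℕ) : Nrm (ind (AN N)) = ∑ n ∈ Icc 1 N, 1 / √(n : ℝ) := by
  rw [Nrm_ind_of_subset_Dset (AN_subset_Dset N), card_AN]

lemma Nrm_ind_BN (N : ℕ) : Nrm (ind (BN N)) = ∑ n ∈ Icc 1 N, 1 / (n : ℝ) := by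
  rw [Nrm_ind_of_forall_notMem_Dset (BN_notMem_Dset N), card_BN]

lemma BN_lt_AN (N : ℕ) : ∀ b ∈ BN N, ∀ a ∈ AN N, b < a := by
  simp only [BN, AN, mem_image, mem_Icc]
  rintro _ ⟨k, hk, rfl⟩ _ ⟨j, hj, rfl⟩
  calc 3 ^ k ≤ 3 ^ N := Nat.pow_le_pow_right (by norm_num) hk.2
    _ < 4 ^ N := Nat.pow_lt_pow_left (by norm_num) (by omega)
    _ = 2 ^ (2 * N) := by rw [pow_mul]; norm_num
    _ < 2 ^ j := Nat.pow_lt_pow_right (by norm_num) (by omega)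

lemma sqrt_le_sum_one_div_sqrt (N : ℕ) : √(N : ℝ) ≤ ∑ n ∈ Icc 1 N, 1 / √(n : ℝ) := by
  have hterm : ∀ n ∈ Icc 1 N, 1 / √(N : ℝ) ≤ 1 / √(n : ℝ) := by
    intro n hn
    have hn := mem_Icc.mp hn
    have : (0 : ℝ) < n := by exact_mod_cast hn.1
    gcongr
    exact_mod_cast hn.2
  calc √(N : ℝ) = #(Icc 1 N) • (1 / √(N : ℝ)) := by simp [← div_eq_mul_inv, Real.div_sqrt]
    _ ≤ _ := card_nsmul_le_sum _ _ _ hterm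

lemma sum_one_div_le_one_add_log (N : ℕ) : ∑ n ∈ Icc 1 N, 1 / (n : ℝ) ≤ 1 + Real.log N := by
  simpa [harmonic_eq_sum_Icc] using harmonic_le_one_add_log N

lemma sum_Icc_one_div_pos {N : ℕ} (hN : 1 ≤ N) : 0 < ∑ n ∈ Icc 1 N, 1 / (n : ℝ) :=
  sum_pos (fun n hn => by have := (mem_Icc.mp hn).1; positivity) ⟨1, mem_Icc.mpr ⟨le_rfl, hN⟩⟩

lemma tendsto_sqrt_div_one_add_log :
    Tendsto (fun x : ℝ => √x / (1 + Real.log x)) atTop atTop := by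
  have hsqrt : Real.sqrt = fun x : ℝ => x ^ (1 / 2 : ℝ) := funext Real.sqrt_eq_rpow
  have hlo : (fun x : ℝ => 1 + Real.log x) =o[atTop] Real.sqrt := by
    rw [hsqrt]
    refine .add ?_ (isLittleO_log_rpow_atTop (by norm_num))
    exact (Asymptotics.isLittleO_const_left.mpr <| .inr <|
      tendsto_norm_atTop_atTop.comp (tendsto_rpow_atTop (by norm_num)))
  have hpos : ∀ᶠ x : ℝ in atTop, 0 < (1 + Real.log x) / √x := by
    filter_upwards [eventually_ge_atTop 1] with x hx
    have := Real.log_nonneg hx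
    have : 0 < √x := Real.sqrt_pos.mpr (by linarith)
    positivity
  refine (tendsto_nhdsWithin_iff.mpr ⟨hlo.tendsto_div_nhds_zero, hpos⟩).inv_tendsto_nhdsGT_zero
    |>.congr fun x => ?_
  simp [inv_div]

lemma tendsto_Nrm_ind_AN_div_Nrm_ind_BN :
    Tendsto (fun N => Nrm (ind (AN N)) / Nrm (ind (BN N))) atTop atTop := by
  refine tendsto_atTop_mono' _ ?_ (tendsto_sqrt_div_one_add_log.comp tendsto_natCast_atTop_atTop)
  filter_upwards [eventually_ge_atTop 1] with N hN
  rw [Function.comp_apply, Nrm_ind_AN, Nrm_ind_BN]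
  exact div_le_div₀ ((Real.sqrt_nonneg _).trans (sqrt_le_sum_one_div_sqrt N))
    (sqrt_le_sum_one_div_sqrt N) (sum_Icc_one_div_pos hN) (sum_one_div_le_one_add_log N)

/-- the canonical basis of `X` is not reverse conservative,
witnessed by `A_N`, `B_N`. -/
theorem stmt_14 :
    (∀ N : ℕ, 1 ≤ N →
      (AN N).card = N ∧ (BN N).card = N ∧
      (∀ b ∈ BN N, ∀ a ∈ AN N, b < a) ∧
      Nrm (ind (AN N)) = ∑ n ∈ Finset.Icc 1 N, 1 / Real.sqrt (n : ℝ) ∧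
      Nrm (ind (BN N)) = ∑ n ∈ Finset.Icc 1 N, 1 / (n : ℝ)) ∧
    Tendsto (fun N : ℕ => Nrm (ind (AN N)) / Nrm (ind (BN N))) atTop atTop ∧
    ¬ (∃ C : ℝ, ∀ A B : Finset ℕ, (∀ b ∈ B, ∀ a ∈ A, b < a) → A.card ≤ B.card →
        Nrm (ind A) ≤ C * Nrm (ind B)) := by
  refine ⟨fun N _ => ⟨card_AN N, card_BN N, BN_lt_AN N, Nrm_ind_AN N, Nrm_ind_BN N⟩,
    tendsto_Nrm_ind_AN_div_Nrm_ind_BN, ?_⟩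
  rintro ⟨C, hC⟩
  obtain ⟨N, hNC, hN⟩ :=
    ((tendsto_Nrm_ind_AN_div_Nrm_ind_BN.eventually_gt_atTop C).and (eventually_ge_atTop 1)).exists
  have hBpos : 0 < Nrm (ind (BN N)) := Nrm_ind_BN N ▸ sum_Icc_one_div_pos hN
  have hAB := hC (AN N) (BN N) (BN_lt_AN N) (by rw [card_AN, card_BN])
  exact (div_le_iff₀ hBpos).mpr hAB |>.not_gt hNC
end
end

section
/- A basis satisfies the RPG condition with constant 1 (‖x − P_Λ(x)‖ ≤ inf{‖x − P_A(x)‖ : |A| ≤ m, A > Λ} for all x, m, and greedy sets Λ of cardinality m) if and only if it satisfies the interval-based condition with constant 1: ‖x − P_Λ(x)‖ ≤ σ̌^Λ_m(x) for all x, m, and greedy sets Λ of cardinality m. -/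
open Finset Filter

noncomputable section

variable {X : Type*} [NormedAddCommGroup X] [NormedSpace ℝ X]

/-! ### Auxiliary lemmas for `stmt_19` -/

section Aux19

variable (f : ℕ → X →L[ℝ] ℝ) (e : ℕ → X)

lemma aux_coeff_sum (hbio : ∀ n m, f n (e m) = if n = m then (1 : ℝ) else 0)
    (C : Finset ℕ) (σ : ℕ → ℝ) (k : ℕ) :
    f k (∑ c ∈ C, σ c • e c) = if k ∈ C then σ k else 0 := by
  rw [map_sum]
  have h : ∀ c ∈ C, f k (σ c • e c) = if k = c then σ c else 0 := by
    intro c _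
    rw [map_smul, hbio, smul_eq_mul, mul_ite, mul_one, mul_zero]
  rw [Finset.sum_congr rfl h, Finset.sum_ite_eq C k σ]

lemma aux_coeff_proj (hbio : ∀ n m, f n (e m) = if n = m then (1 : ℝ) else 0)
    (S : Finset ℕ) (x : X) (k : ℕ) :
    f k (proj f e S x) = if k ∈ S then f k x else 0 :=
  aux_coeff_sum f e hbio S (fun n => f n x) k

/-- Tool: apply the constant-1 check condition to a single competitor. -/
lemma aux_check_le
    (hC : ∀ (x : X) (m : ℕ) (Λ : Finset ℕ), Λ.card = m → GreedySet f x Λ →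
        ‖x - proj f e Λ x‖ ≤ checkSigma f e Λ m x)
    (z : X) (Λ I : Finset ℕ) (hg : GreedySet f z Λ)
    (hI : I = ∅ ∨ ∃ a b : ℕ, a ≤ b ∧ I = Finset.Icc a b ∧ ∀ n ∈ Λ, n ≤ b)
    (hcard : I.card ≤ Λ.card) :
    ‖z - proj f e Λ z‖ ≤ ‖z - proj f e I z‖ := by
  refine (hC z Λ.card Λ rfl hg).trans (csInf_le ⟨0, ?_⟩ ⟨I, hI, hcard, rfl⟩)
  rintro r ⟨J, -, -, rfl⟩
  exact norm_nonneg _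

/-- Tool: apply the constant-1 reverse condition to a single competitor. -/
lemma aux_rev_le
    (hR : ∀ (x : X) (m : ℕ) (Λ : Finset ℕ), Λ.card = m → GreedySet f x Λ →
        ‖x - proj f e Λ x‖ ≤ revSigma f e Λ m x)
    (z : X) (Λ A : Finset ℕ) (hg : GreedySet f z Λ)
    (hcard : A.card ≤ Λ.card) (ho : ∀ n ∈ Λ, ∀ a ∈ A, n < a) :
    ‖z - proj f e Λ z‖ ≤ ‖z - proj f e A z‖ := by
  refine (hR z Λ.card Λ rfl hg).trans (csInf_le ⟨0, ?_⟩ ⟨A, hcard, ho, rfl⟩)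
  rintro r ⟨B, -, -, rfl⟩
  exact norm_nonneg _

/-- Convexity: if the bound holds at both extreme coefficients `±α`, it holds
for every coefficient `d` with `|d| ≤ α`. -/
lemma aux_convex (w y : X) (R d α : ℝ) (hα : 0 ≤ α) (hd : |d| ≤ α)
    (h : ∀ τ : ℝ, |τ| = α → ‖w + τ • y‖ ≤ R) : ‖w + d • y‖ ≤ R := by
  rcases eq_or_lt_of_le hα with h0 | h0
  · have hd0 : d = 0 := by
      have : |d| ≤ 0 := by rw [h0]; exact hd
      exact abs_eq_zero.mp (le_antisymm this (abs_nonneg d))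
    have := h 0 (by simp [← h0])
    simpa [hd0] using this
  · set θ := (d + α) / (2 * α) with hθdef
    have hθ0 : 0 ≤ θ := div_nonneg (by linarith [neg_abs_le d]) (by linarith)
    have hθ1 : θ ≤ 1 := by
      rw [hθdef, div_le_one (by linarith)]
      linarith [le_abs_self d]
    have hd' : d = θ * α + (1 - θ) * (-α) := by
      rw [hθdef]; field_simp; ring
    have hid : w + d • y = θ • (w + α • y) + (1 - θ) • (w + (-α) • y) := by
      rw [hd']; module
    rw [hid]
    have h1 := h α (abs_of_pos h0)
    have h2 := h (-α) (by rw [abs_neg, abs_of_pos h0])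
    calc ‖θ • (w + α • y) + (1 - θ) • (w + (-α) • y)‖
        ≤ θ * ‖w + α • y‖ + (1 - θ) * ‖w + (-α) • y‖ := by
          refine (norm_add_le _ _).trans ?_
          rw [norm_smul, norm_smul, Real.norm_eq_abs, Real.norm_eq_abs,
            abs_of_nonneg hθ0, abs_of_nonneg (by linarith)]
      _ ≤ θ * R + (1 - θ) * R := by
          have hR1 := (norm_nonneg (w + α • y)).trans h1
          exact add_le_add (mul_le_mul_of_nonneg_left h1 hθ0)
            (mul_le_mul_of_nonneg_left h2 (by linarith))
      _ = R := by ring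

/-- Main moving lemma: a small perturbation supported on `B` (to the right) is
dominated by `α`-sized coefficients placed on `C` (to the left). -/
lemma aux_M1 (hbio : ∀ n m, f n (e m) = if n = m then (1 : ℝ) else 0)
    (hC : ∀ (x : X) (m : ℕ) (Λ : Finset ℕ), Λ.card = m → GreedySet f x Λ →
        ‖x - proj f e Λ x‖ ≤ checkSigma f e Λ m x)
    {α : ℝ} (hα : 0 ≤ α) (d σ : ℕ → ℝ) :
    ∀ B C : Finset ℕ, ∀ v : X,
      (∀ k, |f k v| ≤ α) → (∀ k ∈ B, f k v = 0) → (∀ k ∈ C, f k v = 0) →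
      (∀ c ∈ C, ∀ b ∈ B, c < b) → B.card ≤ C.card →
      (∀ b ∈ B, |d b| ≤ α) → (∀ c ∈ C, |σ c| = α) →
      ‖v + ∑ b ∈ B, d b • e b‖ ≤ ‖v + ∑ c ∈ C, σ c • e c‖ := by
  intro B
  induction B using Finset.induction_on with
  | empty =>
    intro C v hv hvB hvC _ _ _ hσ
    simp only [Finset.sum_empty, add_zero]
    set z := v + ∑ c ∈ C, σ c • e c with hz
    have hcoeff : ∀ k, f k z = f k v + (if k ∈ C then σ k else 0) := by
      intro k; rw [hz, map_add, aux_coeff_sum f e hbio]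
    have hproj : proj f e C z = ∑ c ∈ C, σ c • e c := by
      refine Finset.sum_congr rfl fun c hc => ?_
      rw [hcoeff, hvC c hc, if_pos hc, zero_add]
    have hsub : z - proj f e C z = v := by rw [hproj, hz]; abel
    have hgz : GreedySet f z C := by
      intro n hn k hk
      rw [hcoeff, hcoeff, if_pos hn, if_neg hk, hvC n hn, zero_add, add_zero, hσ n hn]
      exact hv k
    have h := aux_check_le f e hC z C ∅ hgz (Or.inl rfl) (by simp)
    rw [hsub] at h
    simpa [proj] using h
  | @insert b B' hbB' ih =>
    intro C v hv hvB hvC horder hcard hd hσ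
    have hpos : 0 < C.card := by
      rw [Finset.card_insert_of_notMem hbB'] at hcard; omega
    obtain ⟨c, hcC⟩ := Finset.card_pos.mp hpos
    have hcb : c < b := horder c hcC b (Finset.mem_insert_self b B')
    have hcB' : c ∉ B' := fun h =>
      lt_irrefl c (horder c hcC c (Finset.mem_insert_of_mem h))
    rw [Finset.sum_insert hbB']
    set w := v + ∑ b' ∈ B', d b' • e b' with hw
    have hgoal : v + (d b • e b + ∑ b' ∈ B', d b' • e b') = w + d b • e b := by
      rw [hw]; abel
    rw [hgoal]
    have hwcoeff : ∀ k, f k w = f k v + (if k ∈ B' then d k else 0) := by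
      intro k; rw [hw, map_add, aux_coeff_sum f e hbio]
    have hwb : ∀ k, |f k w| ≤ α := by
      intro k; rw [hwcoeff]
      by_cases hk : k ∈ B'
      · rw [if_pos hk, hvB k (Finset.mem_insert_of_mem hk), zero_add]
        exact hd k (Finset.mem_insert_of_mem hk)
      · rw [if_neg hk, add_zero]; exact hv k
    refine aux_convex w (e b) _ (d b) α hα (hd b (Finset.mem_insert_self b B')) ?_
    intro τ hτ
    -- move the coefficient `τ` from position `b` to position `c`
    set z := w + σ c • e c + τ • e b with hz
    have hzcoeff : ∀ k, f k z = f k w + (if k = c then σ c else 0)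
        + (if k = b then τ else 0) := by
      intro k
      rw [hz, map_add, map_add, map_smul, map_smul, hbio, hbio, smul_eq_mul,
        smul_eq_mul, mul_ite, mul_one, mul_zero, mul_ite, mul_one, mul_zero]
    have hfcw : f c w = 0 := by
      rw [hwcoeff, if_neg hcB', hvC c hcC, add_zero]
    have hfbw : f b w = 0 := by
      rw [hwcoeff, if_neg hbB', hvB b (Finset.mem_insert_self b B'), add_zero]
    have hfcz : f c z = σ c := by
      rw [hzcoeff, hfcw, if_pos rfl, if_neg hcb.ne, zero_add, add_zero]
    have hfbz : f b z = τ := by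
      rw [hzcoeff, hfbw, if_neg hcb.ne', if_pos rfl, zero_add, zero_add]
    have hgz : GreedySet f z {c} := by
      intro n hn k hk
      rw [Finset.mem_singleton] at hn hk
      rw [hn, hfcz, hσ c hcC]
      by_cases hkb : k = b
      · subst hkb; rw [hfbz, hτ]
      · rw [hzcoeff, if_neg hk, if_neg hkb, add_zero, add_zero]
        exact hwb k
    have h1 := aux_check_le f e hC z {c} (Finset.Icc b b) hgz
      (Or.inr ⟨b, b, le_refl b, rfl, fun n hn => by
        rw [Finset.mem_singleton] at hn; subst hn; exact hcb.le⟩)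
      (by simp)
    have hproj_c : proj f e {c} z = σ c • e c := by
      show (∑ n ∈ {c}, f n z • e n) = _
      rw [Finset.sum_singleton, hfcz]
    have hproj_b : proj f e (Finset.Icc b b) z = τ • e b := by
      show (∑ n ∈ Finset.Icc b b, f n z • e n) = _
      rw [Finset.Icc_self, Finset.sum_singleton, hfbz]
    have e1 : z - proj f e {c} z = w + τ • e b := by rw [hproj_c, hz]; abel
    have e2 : z - proj f e (Finset.Icc b b) z = w + σ c • e c := by
      rw [hproj_b, hz]; abel
    rw [e1, e2] at h1
    refine h1.trans ?_
    have h2 : w + σ c • e c = (v + σ c • e c) + ∑ b' ∈ B', d b' • e b' := by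
      rw [hw]; abel
    rw [h2]
    have hvc : ∀ k, f k (v + σ c • e c) = f k v + (if k = c then σ c else 0) := by
      intro k
      rw [map_add, map_smul, hbio, smul_eq_mul, mul_ite, mul_one, mul_zero]
    refine (ih (C.erase c) (v + σ c • e c) ?_ ?_ ?_ ?_ ?_ ?_ ?_).trans_eq ?_
    · intro k; rw [hvc]
      by_cases hk : k = c
      · subst hk; rw [hvC k hcC, if_pos rfl, zero_add, hσ k hcC]
      · rw [if_neg hk, add_zero]; exact hv k
    · intro k hk
      rw [hvc, hvB k (Finset.mem_insert_of_mem hk), if_neg, add_zero]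
      exact fun h => hcB' (h ▸ hk)
    · intro k hk
      rw [hvc, hvC k (Finset.mem_of_mem_erase hk),
        if_neg (Finset.ne_of_mem_erase hk), add_zero]
    · intro c' hc' b' hb'
      exact horder c' (Finset.mem_of_mem_erase hc') b' (Finset.mem_insert_of_mem hb')
    · rw [Finset.card_erase_of_mem hcC]
      rw [Finset.card_insert_of_notMem hbB'] at hcard; omega
    · intro b' hb'; exact hd b' (Finset.mem_insert_of_mem hb')
    · intro c' hc'; exact hσ c' (Finset.mem_of_mem_erase hc')
    · rw [add_assoc, Finset.add_sum_erase C (fun c' => σ c' • e c') hcC]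

/-- Growing lemma: level-`α` signed coefficients on `C` are dominated by the
actual (larger) coefficients `g`. -/
lemma aux_M2 (hbio : ∀ n m, f n (e m) = if n = m then (1 : ℝ) else 0)
    (hC : ∀ (x : X) (m : ℕ) (Λ : Finset ℕ), Λ.card = m → GreedySet f x Λ →
        ‖x - proj f e Λ x‖ ≤ checkSigma f e Λ m x)
    {α : ℝ} (hα : 0 ≤ α) (g : ℕ → ℝ) :
    ∀ n : ℕ, ∀ C : Finset ℕ, ∀ v : X, C.card ≤ n →
      (∀ k, |f k v| ≤ α) → (∀ c ∈ C, f c v = 0) → (∀ c ∈ C, α ≤ |g c|) →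
      ‖v + ∑ c ∈ C, ((α / |g c|) * g c) • e c‖ ≤ ‖v + ∑ c ∈ C, g c • e c‖ := by
  intro n
  induction n with
  | zero =>
    intro C v hcard _ _ _
    rw [Finset.card_eq_zero.mp (Nat.le_zero.mp hcard)]
    simp
  | succ n ihn =>
    intro C v hcard hv hvC hg
    rcases C.eq_empty_or_nonempty with rfl | hne
    · simp
    obtain ⟨c₀, hc₀, hmax⟩ := C.exists_max_image (fun c => |g c|) hne
    set t := g c₀ with ht
    set σ₀ := (α / |t|) * t with hσ₀
    have hσ₀abs : |σ₀| ≤ α := by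
      rcases eq_or_ne t 0 with h | h
      · rw [hσ₀, h, mul_zero, abs_zero]; exact hα
      · rw [hσ₀, abs_mul, abs_of_nonneg (div_nonneg hα (abs_nonneg t)),
          div_mul_cancel₀ α (abs_ne_zero.mpr h)]
    have hsplit1 : ∑ c ∈ C, ((α / |g c|) * g c) • e c
        = σ₀ • e c₀ + ∑ c ∈ C.erase c₀, ((α / |g c|) * g c) • e c :=
      (Finset.add_sum_erase C (fun c => ((α / |g c|) * g c) • e c) hc₀).symm
    have hsplit2 : ∑ c ∈ C, g c • e c
        = g c₀ • e c₀ + ∑ c ∈ C.erase c₀, g c • e c :=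
      (Finset.add_sum_erase C (fun c => g c • e c) hc₀).symm
    have hvc : ∀ k, f k (v + σ₀ • e c₀) = f k v + (if k = c₀ then σ₀ else 0) := by
      intro k
      rw [map_add, map_smul, hbio, smul_eq_mul, mul_ite, mul_one, mul_zero]
    have step1 : ‖v + ∑ c ∈ C, ((α / |g c|) * g c) • e c‖
        ≤ ‖(v + σ₀ • e c₀) + ∑ c ∈ C.erase c₀, g c • e c‖ := by
      have h := ihn (C.erase c₀) (v + σ₀ • e c₀)
        (by rw [Finset.card_erase_of_mem hc₀]; omega)
        (by
          intro k; rw [hvc]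
          by_cases hk : k = c₀
          · subst hk; rw [hvC k hc₀, if_pos rfl, zero_add]; exact hσ₀abs
          · rw [if_neg hk, add_zero]; exact hv k)
        (by
          intro c hc
          rw [hvc, hvC c (Finset.mem_of_mem_erase hc),
            if_neg (Finset.ne_of_mem_erase hc), add_zero])
        (fun c hc => hg c (Finset.mem_of_mem_erase hc))
      rw [hsplit1]
      calc ‖v + (σ₀ • e c₀ + ∑ c ∈ C.erase c₀, ((α / |g c|) * g c) • e c)‖
          = ‖(v + σ₀ • e c₀) + ∑ c ∈ C.erase c₀, ((α / |g c|) * g c) • e c‖ := by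
            rw [add_assoc]
        _ ≤ _ := h
    refine step1.trans ?_
    set W := v + ∑ c ∈ C.erase c₀, g c • e c with hW
    have hWgoal : (v + σ₀ • e c₀) + ∑ c ∈ C.erase c₀, g c • e c = W + σ₀ • e c₀ := by
      rw [hW]; abel
    have hWgoal2 : v + ∑ c ∈ C, g c • e c = W + t • e c₀ := by
      rw [hW, hsplit2, ht]; abel
    rw [hWgoal, hWgoal2]
    -- grow the coefficient at `c₀` from `σ₀` to `t`
    have hWcoeff : ∀ k, f k W = f k v + (if k ∈ C.erase c₀ then g k else 0) := by
      intro k; rw [hW, map_add, aux_coeff_sum f e hbio]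
    have hfc₀W : f c₀ W = 0 := by
      rw [hWcoeff, if_neg (Finset.notMem_erase c₀ C), hvC c₀ hc₀, add_zero]
    rcases eq_or_ne t 0 with h0 | h0
    · have : σ₀ = 0 := by rw [hσ₀, h0, mul_zero]
      rw [this, h0]
    · have htpos : 0 < |t| := abs_pos.mpr h0
      have hWb : ∀ k, |f k W| ≤ |t| := by
        intro k; rw [hWcoeff]
        by_cases hk : k ∈ C.erase c₀
        · rw [if_pos hk, hvC k (Finset.mem_of_mem_erase hk), zero_add]
          exact hmax k (Finset.mem_of_mem_erase hk)
        · rw [if_neg hk, add_zero]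
          exact (hv k).trans (hg c₀ hc₀)
      have hsupp : ‖W‖ ≤ ‖W + t • e c₀‖ := by
        set z := W + t • e c₀ with hz
        have hzc : ∀ k, f k z = f k W + (if k = c₀ then t else 0) := by
          intro k
          rw [hz, map_add, map_smul, hbio, smul_eq_mul, mul_ite, mul_one, mul_zero]
        have hfc₀z : f c₀ z = t := by
          rw [hzc, hfc₀W, if_pos rfl, zero_add]
        have hgz : GreedySet f z {c₀} := by
          intro n' hn' k hk
          rw [Finset.mem_singleton] at hn' hk
          rw [hn', hfc₀z, hzc, if_neg hk, add_zero]
          exact hWb k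
        have h := aux_check_le f e hC z {c₀} ∅ hgz (Or.inl rfl) (by simp)
        have hpz : proj f e {c₀} z = t • e c₀ := by
          show (∑ n' ∈ {c₀}, f n' z • e n') = _
          rw [Finset.sum_singleton, hfc₀z]
        have ez : z - proj f e {c₀} z = W := by rw [hpz, hz]; abel
        rw [ez] at h
        simpa [proj] using h
      set θ := α / |t| with hθ
      have hθ0 : 0 ≤ θ := div_nonneg hα (abs_nonneg t)
      have hθ1 : θ ≤ 1 := by rw [hθ, div_le_one htpos]; exact hg c₀ hc₀
      have hid : W + σ₀ • e c₀ = θ • (W + t • e c₀) + (1 - θ) • W := by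
        rw [hσ₀, hθ]; module
      rw [hid]
      calc ‖θ • (W + t • e c₀) + (1 - θ) • W‖
          ≤ θ * ‖W + t • e c₀‖ + (1 - θ) * ‖W‖ := by
            refine (norm_add_le _ _).trans ?_
            rw [norm_smul, norm_smul, Real.norm_eq_abs, Real.norm_eq_abs,
              abs_of_nonneg hθ0, abs_of_nonneg (by linarith)]
        _ ≤ θ * ‖W + t • e c₀‖ + (1 - θ) * ‖W + t • e c₀‖ :=
            add_le_add le_rfl (mul_le_mul_of_nonneg_left hsupp (by linarith))
        _ = ‖W + t • e c₀‖ := by ring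

end Aux19
/-- constant-1 RPG condition iff constant-1 interval condition. -/
theorem stmt_19 [CompleteSpace X] (f : ℕ → X →L[ℝ] ℝ) (e : ℕ → X)
    (hb : BasisSystem f e) :
    (∀ (x : X) (m : ℕ) (Λ : Finset ℕ), Λ.card = m → GreedySet f x Λ →
        ‖x - proj f e Λ x‖ ≤ revSigma f e Λ m x) ↔
      (∀ (x : X) (m : ℕ) (Λ : Finset ℕ), Λ.card = m → GreedySet f x Λ →
        ‖x - proj f e Λ x‖ ≤ checkSigma f e Λ m x) := by
  obtain hbio := hb.biorth
  constructor
  · -- reverse condition ⇒ interval condition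
    intro hR x m Λ hcard hg
    refine le_csInf ⟨‖x‖, ∅, Or.inl rfl, by simp, by simp [proj]⟩ ?_
    rintro r ⟨I, hI, hIcard, rfl⟩
    rcases hI with rfl | ⟨a, b, hab, rfl, hΛb⟩
    · have h := aux_rev_le f e hR x Λ ∅ hg (by simp) (by simp)
      simpa [proj] using h
    · set Λ₁ := Λ ∩ Finset.Icc a b with hΛ₁
      set Λ₂ := Λ \ Finset.Icc a b with hΛ₂
      set I₂ := Finset.Icc a b \ Λ with hI₂
      set w := x - proj f e Λ₁ x with hwdef
      have hwk : ∀ k, f k w = if k ∈ Λ₁ then 0 else f k x := by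
        intro k
        rw [hwdef, map_sub, aux_coeff_proj f e hbio]
        by_cases hk : k ∈ Λ₁
        · rw [if_pos hk, if_pos hk, sub_self]
        · rw [if_neg hk, if_neg hk, sub_zero]
      have hgw : GreedySet f w Λ₂ := by
        intro n hn k hk
        have hnΛ₁ : n ∉ Λ₁ := fun h =>
          (Finset.mem_sdiff.mp hn).2 (Finset.mem_inter.mp h).2
        rw [hwk n, if_neg hnΛ₁, hwk k]
        by_cases hkΛ₁ : k ∈ Λ₁
        · rw [if_pos hkΛ₁, abs_zero]; exact abs_nonneg _
        · rw [if_neg hkΛ₁]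
          have hkΛ : k ∉ Λ := fun hkΛ =>
            hk (Finset.mem_sdiff.mpr
              ⟨hkΛ, fun hkI => hkΛ₁ (Finset.mem_inter.mpr ⟨hkΛ, hkI⟩)⟩)
          exact hg n (Finset.mem_sdiff.mp hn).1 k hkΛ
      have hcard₂ : I₂.card ≤ Λ₂.card := by
        have h1 := Finset.card_inter_add_card_sdiff Λ (Finset.Icc a b)
        have h2 := Finset.card_inter_add_card_sdiff (Finset.Icc a b) Λ
        have h3 : (Λ ∩ Finset.Icc a b).card = (Finset.Icc a b ∩ Λ).card := by
          rw [Finset.inter_comm]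
        have h4 : (Finset.Icc a b).card ≤ Λ.card := by rw [hcard]; exact hIcard
        rw [hΛ₂, hI₂]; omega
      have horder : ∀ n ∈ Λ₂, ∀ a' ∈ I₂, n < a' := by
        intro n hn a' ha'
        obtain ⟨hnΛ, hnI⟩ := Finset.mem_sdiff.mp hn
        obtain ⟨ha'I, -⟩ := Finset.mem_sdiff.mp ha'
        rw [Finset.mem_Icc] at hnI ha'I
        have := hΛb n hnΛ
        omega
      have h := aux_rev_le f e hR w Λ₂ I₂ hgw hcard₂ horder
      have hpΛ₂ : proj f e Λ₂ w = proj f e Λ₂ x := by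
        refine Finset.sum_congr rfl fun n hn => ?_
        have hnΛ₁ : n ∉ Λ₁ := fun hmem =>
          (Finset.mem_sdiff.mp hn).2 (Finset.mem_inter.mp hmem).2
        rw [hwk n, if_neg hnΛ₁]
      have hpI₂ : proj f e I₂ w = proj f e I₂ x := by
        refine Finset.sum_congr rfl fun n hn => ?_
        have hnΛ₁ : n ∉ Λ₁ := fun hmem =>
          (Finset.mem_sdiff.mp hn).2 (Finset.mem_inter.mp hmem).1
        rw [hwk n, if_neg hnΛ₁]
      have hsum1 : proj f e Λ₁ x + proj f e Λ₂ x = proj f e Λ x :=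
        Finset.sum_inter_add_sum_sdiff Λ (Finset.Icc a b) _
      have hsum2 : proj f e Λ₁ x + proj f e I₂ x = proj f e (Finset.Icc a b) x := by
        have := Finset.sum_inter_add_sum_sdiff (Finset.Icc a b) Λ
          (fun n => f n x • e n)
        rw [hΛ₁, Finset.inter_comm]
        exact this
      have e1 : w - proj f e Λ₂ w = x - proj f e Λ x := by
        rw [hpΛ₂, hwdef, ← hsum1]; abel
      have e2 : w - proj f e I₂ w = x - proj f e (Finset.Icc a b) x := by
        rw [hpI₂, hwdef, ← hsum2]; abel
      rw [e1, e2] at h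
      exact h
  · -- interval condition ⇒ reverse condition
    intro hCk x m Λ hcard hg
    refine le_csInf ⟨‖x‖, ∅, by simp, by simp, by simp [proj]⟩ ?_
    rintro r ⟨A, hAcard, hAord, rfl⟩
    rcases Λ.eq_empty_or_nonempty with rfl | hne
    · have hA : A = ∅ := by
        rw [Finset.card_empty] at hcard
        exact Finset.card_eq_zero.mp (Nat.le_zero.mp (hcard ▸ hAcard))
      subst hA
      simp [proj]
    · set α := Λ.inf' hne fun n => |f n x| with hαdef
      have hα : 0 ≤ α := Finset.le_inf' hne _ fun n _ => abs_nonneg _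
      have hon : ∀ c ∈ Λ, α ≤ |f c x| := fun c hc =>
        Finset.inf'_le (fun n => |f n x|) hc
      have hAΛ : ∀ a ∈ A, a ∉ Λ := fun a ha haΛ =>
        lt_irrefl a (hAord a haΛ a ha)
      have hoff : ∀ k, k ∉ Λ → |f k x| ≤ α :=
        fun k hk => Finset.le_inf' hne _ fun n hn => hg n hn k hk
      have hdisj : Disjoint Λ A :=
        Finset.disjoint_right.mpr fun a ha => hAΛ a ha
      set u := x - proj f e (Λ ∪ A) x with hudef
      have huk : ∀ k, f k u = if k ∈ Λ ∪ A then 0 else f k x := by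
        intro k
        rw [hudef, map_sub, aux_coeff_proj f e hbio]
        by_cases hk : k ∈ Λ ∪ A
        · rw [if_pos hk, if_pos hk, sub_self]
        · rw [if_neg hk, if_neg hk, sub_zero]
      have hub : ∀ k, |f k u| ≤ α := by
        intro k
        rw [huk]
        by_cases hk : k ∈ Λ ∪ A
        · rw [if_pos hk, abs_zero]; exact hα
        · rw [if_neg hk]
          exact hoff k fun hkΛ => hk (Finset.mem_union_left A hkΛ)
      have huA : ∀ k ∈ A, f k u = 0 := fun k hk => by
        rw [huk, if_pos (Finset.mem_union_right Λ hk)]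
      have huΛ : ∀ k ∈ Λ, f k u = 0 := fun k hk => by
        rw [huk, if_pos (Finset.mem_union_left A hk)]
      have hpu : proj f e (Λ ∪ A) x = proj f e Λ x + proj f e A x :=
        Finset.sum_union hdisj
      have eq1 : x - proj f e Λ x = u + proj f e A x := by
        rw [hudef, hpu]; abel
      have eq2 : x - proj f e A x = u + proj f e Λ x := by
        rw [hudef, hpu]; abel
      have hσprop : ∀ c ∈ Λ, |(α / |f c x|) * f c x| = α := by
        intro c hc
        rcases eq_or_ne (f c x) 0 with h | h
        · have : α = 0 := le_antisymm (by simpa [h] using hon c hc) hα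
          rw [h, mul_zero, abs_zero, this]
        · rw [abs_mul, abs_of_nonneg (div_nonneg hα (abs_nonneg _)),
            div_mul_cancel₀ α (abs_ne_zero.mpr h)]
      have hAle : ∀ a ∈ A, |f a x| ≤ α := fun a ha => hoff a (hAΛ a ha)
      have hM1 := aux_M1 f e hbio hCk hα (fun n => f n x)
        (fun c => (α / |f c x|) * f c x) A Λ u hub huA huΛ hAord
        (hcard ▸ hAcard) hAle hσprop
      have hM2 := aux_M2 f e hbio hCk hα (fun n => f n x) Λ.card Λ u le_rfl
        hub huΛ hon
      calc ‖x - proj f e Λ x‖ = ‖u + ∑ a ∈ A, f a x • e a‖ := by rw [eq1]; rfl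
        _ ≤ ‖u + ∑ c ∈ Λ, ((α / |f c x|) * f c x) • e c‖ := hM1
        _ ≤ ‖u + ∑ c ∈ Λ, f c x • e c‖ := hM2
        _ = ‖x - proj f e A x‖ := by rw [eq2]; rfl
end
end
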